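/- arXiv:1102.2701 — 4 statements merged into one kernel-verified Lean document; each statement's English description precedes it below -/
import Mathlib

section
/- With h_n = sup{x ≥ 0 : n·S_-(x) ≥ x} for a positive random variable X with S(x)=P(X>x)>0 for all x, it holds that h_n/n → 0 as n → ∞. -/
/-!
Above a level `K` with `S_-(x) ≤ ε` on `[K, ∞)`, the condition `x ≤ n·S_-(x)` forces `x ≤ εn`,
so `h_n ≤ max K (εn)`. Since `S_-(x) → 0` by continuity of the measure from above, `h_n / n` is
eventually below any `ε > 0`.
-/

open MeasureTheory ProbabilityTheory Filter Topology

noncomputable def hirschIndex (F : ℝ → ℝ) (t : ℝ) : ℝ :=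
  sSup {x : ℝ | 0 ≤ x ∧ x ≤ t * F x}

lemma hirschIndex_nonneg (F : ℝ → ℝ) (t : ℝ) : 0 ≤ hirschIndex F t :=
  Real.sSup_nonneg fun _ hx => hx.1

lemma hirschIndex_le_max {F : ℝ → ℝ} {K ε t : ℝ} (hK : ∀ x ≥ K, F x ≤ ε) (hε : 0 ≤ ε)
    (ht : 0 ≤ t) : hirschIndex F t ≤ max K (ε * t) := by
  refine Real.sSup_le (fun x ⟨_, hx⟩ => ?_) (le_max_of_le_right (mul_nonneg hε ht))
  rcases lt_or_ge x K with hxK | hxK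
  · exact le_max_of_le_left hxK.le
  · calc x ≤ t * F x := hx
      _ ≤ t * ε := mul_le_mul_of_nonneg_left (hK x hxK) ht
      _ = ε * t := mul_comm t ε
      _ ≤ max K (ε * t) := le_max_right _ _

lemma tendsto_hirschIndex_div_atTop {F : ℝ → ℝ} (hF : Tendsto F atTop (𝓝 0)) :
    Tendsto (fun t => hirschIndex F t / t) atTop (𝓝 0) := by
  refine tendsto_order.2 ⟨fun a ha => ?_, fun a ha => ?_⟩
  · filter_upwards [eventually_ge_atTop 0] with t ht
    exact ha.trans_le (div_nonneg (hirschIndex_nonneg F t) ht)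
  · obtain ⟨K, hK⟩ := eventually_atTop.1 (hF.eventually (ge_mem_nhds (half_pos ha)))
    filter_upwards [eventually_gt_atTop (max 0 (K / a))] with t ht
    have ht0 : 0 < t := (le_max_left _ _).trans_lt ht
    have hKt : K < a * t := (div_lt_iff₀' ha).1 ((le_max_right _ _).trans_lt ht)
    rw [div_lt_iff₀ ht0]
    calc hirschIndex F t ≤ max K (a / 2 * t) := hirschIndex_le_max hK (half_pos ha).le ht0.le
      _ < a * t := max_lt hKt (by nlinarith)

lemma tendsto_measure_setOf_le_atTop {Ω : Type*} [MeasurableSpace Ω] (μ : Measure Ω)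
    [IsFiniteMeasure μ] {X : Ω → ℝ} (hX : Measurable X) :
    Tendsto (fun x : ℝ => μ {ω | x ≤ X ω}) atTop (𝓝 0) := by
  have hempty : (⋂ x : ℝ, {ω | x ≤ X ω}) = ∅ :=
    Set.iInter_eq_empty_iff.2 fun ω => ⟨X ω + 1, by simp⟩
  have := tendsto_measure_iInter_atTop (μ := μ) (s := fun x : ℝ => {ω | x ≤ X ω})
    (fun _ => (hX measurableSet_Ici).nullMeasurableSet) (fun _ _ hab _ hω => hab.trans hω)
    ⟨0, measure_ne_top _ _⟩
  rwa [hempty, measure_empty] at this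

theorem hirsch_index_div_n_tendsto_zero_general
    {Ω : Type*} [MeasureSpace Ω] [IsProbabilityMeasure (ℙ : Measure Ω)]
    (X : Ω → ℝ) (hX : Measurable X)
    (Sm : ℝ → ℝ)
    (hSm : ∀ x, Sm x = (ℙ {ω | x ≤ X ω}).toReal)
    (h : ℕ → ℝ)
    (hh : ∀ n : ℕ, h n = sSup {x : ℝ | 0 ≤ x ∧ x ≤ n * Sm x}) :
    Tendsto (fun n : ℕ => h n / n) atTop (nhds 0) := by
  have hSm_tendsto : Tendsto Sm atTop (𝓝 0) := by
    rw [funext hSm]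
    simpa only [Function.comp_def, ENNReal.toReal_zero] using
      (ENNReal.tendsto_toReal ENNReal.zero_ne_top).comp (tendsto_measure_setOf_le_atTop ℙ hX)
  obtain rfl : h = fun n : ℕ => hirschIndex Sm n := funext hh
  exact (tendsto_hirschIndex_div_atTop hSm_tendsto).comp tendsto_natCast_atTop_atTop

/-- the theoretical Hirsch index satisfies `h n / n → 0`. -/
theorem hirsch_index_div_n_tendsto_zero
    {Ω : Type*} [MeasureSpace Ω] [IsProbabilityMeasure (ℙ : Measure Ω)]
    (X : Ω → ℝ) (hX : Measurable X) (hXpos : ∀ ω, 0 < X ω)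
    (S Sm : ℝ → ℝ)
    (hS : ∀ x, S x = (ℙ {ω | x < X ω}).toReal)
    (hSm : ∀ x, Sm x = (ℙ {ω | x ≤ X ω}).toReal)
    (hSpos : ∀ x, 0 < S x)
    (h : ℕ → ℝ)
    (hh : ∀ n : ℕ, h n = sSup {x : ℝ | 0 ≤ x ∧ x ≤ n * Sm x}) :
    Tendsto (fun n : ℕ => h n / n) atTop (nhds 0) :=
  hirsch_index_div_n_tendsto_zero_general X hX Sm hSm h hh
end

section
/- There exists a constant C > 0 (depending only on the Osipov constant A) such that for all n and all h_n ≥ 1, Σ_{j=⌊2h_n⌋+1}^n r_{j,n} ≤ C/h_n^{3/2}, where r_{j,n} = p_{j,n} + 2Σ_{l=j+1}^n p_{l,n}. -/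
open MeasureTheory ProbabilityTheory Finset

/-- Corollary 3.1: there is `C > 0` such that for all `n` with `h_n ≥ 1`,
`∑_{j=⌊2h_n⌋+1}^n r_{j,n} ≤ C / h_n^{3/2}`. -/
theorem hirsch_tail_sum_bound
    {Ω : Type*} [MeasureSpace Ω] [IsProbabilityMeasure (ℙ : Measure Ω)]
    (X : Ω → ℝ) (hX : Measurable X) (hXpos : ∀ ω, 0 < X ω)
    (S Sm : ℝ → ℝ)
    (hS : ∀ x, S x = (ℙ {ω | x < X ω}).toReal)
    (hSm : ∀ x, Sm x = (ℙ {ω | x ≤ X ω}).toReal)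
    (hSpos : ∀ x, 0 < S x)
    (h : ℕ → ℝ)
    (hh : ∀ n : ℕ, h n = sSup {x : ℝ | 0 ≤ x ∧ x ≤ n * Sm x})
    (p : ℕ → ℕ → ℝ)
    (hp : ∀ j n, p j n = ∑ y ∈ Finset.Icc j n,
      (n.choose y : ℝ) * S ((j : ℝ) - 1) ^ y * (1 - S ((j : ℝ) - 1)) ^ (n - y))
    (r : ℕ → ℕ → ℝ)
    (hr : ∀ j n, r j n = p j n + 2 * ∑ l ∈ Finset.Icc (j + 1) n, p l n) :
    ∃ C : ℝ, 0 < C ∧ ∀ n : ℕ, 1 ≤ h n →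
      ∑ j ∈ Finset.Icc (⌊2 * h n⌋₊ + 1) n, r j n ≤ C / (h n) ^ ((3 : ℝ) / 2) := by
  -- Basic facts about S and Sm
  have hSm_nonneg : ∀ x, 0 ≤ Sm x := fun x => by rw [hSm]; exact ENNReal.toReal_nonneg
  have hSm_le_one : ∀ x, Sm x ≤ 1 := by
    intro x
    rw [hSm]
    have h1 : ℙ {ω | x ≤ X ω} ≤ ℙ (Set.univ : Set Ω) := measure_mono (Set.subset_univ _)
    have h2 : (ℙ {ω | x ≤ X ω}).toReal ≤ (ℙ (Set.univ : Set Ω)).toReal :=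
      ENNReal.toReal_mono (measure_ne_top _ _) h1
    simpa [measure_univ] using h2
  have hS_le_Sm : ∀ x, S x ≤ Sm x := by
    intro x
    rw [hS, hSm]
    exact ENNReal.toReal_mono (measure_ne_top _ _)
      (measure_mono (fun ω hω => le_of_lt (Set.mem_setOf_eq ▸ hω)))
  have hSm_anti : ∀ x y : ℝ, x ≤ y → Sm y ≤ Sm x := by
    intro x y hxy
    rw [hSm, hSm]
    exact ENNReal.toReal_mono (measure_ne_top _ _)
      (measure_mono (fun ω hω => le_trans hxy hω))
  -- key property of h : above h n we have n * Sm x < x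
  have hTprop : ∀ n : ℕ, ∀ x : ℝ, 0 ≤ x → h n < x → (n : ℝ) * Sm x < x := by
    intro n x hx0 hx
    by_contra hcon
    push_neg at hcon
    have hxT : x ∈ {x : ℝ | 0 ≤ x ∧ x ≤ (n : ℝ) * Sm x} := ⟨hx0, hcon⟩
    have hbdd : BddAbove {x : ℝ | 0 ≤ x ∧ x ≤ (n : ℝ) * Sm x} := by
      refine ⟨(n : ℝ), fun y hy => ?_⟩
      have h1 : y ≤ (n : ℝ) * Sm y := hy.2
      have h2 : (n : ℝ) * Sm y ≤ (n : ℝ) * 1 :=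
        mul_le_mul_of_nonneg_left (hSm_le_one y) (Nat.cast_nonneg n)
      linarith
    have hle : x ≤ sSup {x : ℝ | 0 ≤ x ∧ x ≤ (n : ℝ) * Sm x} := le_csSup hbdd hxT
    rw [← hh n] at hle
    linarith
  -- the geometric ratio
  set c : ℝ := Real.exp (1/2) / 2 with hc_def
  have hc0 : 0 < c := by positivity
  have hc1 : c < 1 := by
    have h2 : Real.exp (1/2) < 2 := by
      have e2 : Real.exp (1/2) * Real.exp (1/2) = Real.exp 1 := by
        rw [← Real.exp_add]; norm_num
      nlinarith [Real.exp_one_lt_d9, Real.exp_pos ((1:ℝ)/2)]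
    rw [hc_def]
    linarith
  have h1c : 0 < 1 - c := by linarith
  -- geometric sum estimate
  have hgeom : ∀ a n : ℕ, ∑ l ∈ Finset.Icc a n, c ^ l ≤ c ^ a / (1 - c) := by
    intro a n
    rcases le_or_gt a n with hle | hlt
    · rw [← Finset.Ico_add_one_right_eq_Icc, geom_sum_Ico (ne_of_lt hc1) (by omega)]
      have heq : (c ^ (n + 1) - c ^ a) / (c - 1) = (c ^ a - c ^ (n + 1)) / (1 - c) := by
        rw [← neg_div_neg_eq]
        ring_nf
      rw [heq]
      have hnum : c ^ a - c ^ (n + 1) ≤ c ^ a := by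
        have : (0:ℝ) ≤ c ^ (n+1) := by positivity
        linarith
      gcongr
    · rw [Finset.Icc_eq_empty (by omega)]
      simp only [Finset.sum_empty]
      positivity
  -- the Chernoff bound on p
  have hpb : ∀ n : ℕ, 1 ≤ h n → ∀ j : ℕ, ⌊2 * h n⌋₊ + 1 ≤ j → j ≤ n → p j n ≤ c ^ j := by
    intro n hh1 j hj1 hjn
    set q : ℝ := S ((j : ℝ) - 1) with hq_def
    have hq0 : 0 < q := hSpos _
    have hq1 : q ≤ 1 := le_trans (hS_le_Sm _) (hSm_le_one _)
    -- j ≥ 3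
    have hfl2 : 2 ≤ ⌊2 * h n⌋₊ := by
      rw [Nat.le_floor_iff (by linarith)]
      push_cast
      linarith
    have hj3 : 3 ≤ j := by omega
    have hj3' : (3 : ℝ) ≤ (j : ℝ) := by exact_mod_cast hj3
    -- 2 * h n < j
    have h2hj : 2 * h n < (j : ℝ) := by
      have h1 : 2 * h n < (⌊2 * h n⌋₊ : ℝ) + 1 := Nat.lt_floor_add_one _
      have h2 : ((⌊2 * h n⌋₊ + 1 : ℕ) : ℝ) ≤ (j : ℝ) := by exact_mod_cast hj1
      push_cast at h2
      linarith
    -- mean bound : n * q < j / 2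
    have hmean : (n : ℝ) * q ≤ (j : ℝ) / 2 := by
      have hx0 : (0:ℝ) ≤ (j : ℝ) / 2 := by linarith
      have hxh : h n < (j : ℝ) / 2 := by linarith
      have h1 : (n : ℝ) * Sm ((j : ℝ) / 2) < (j : ℝ) / 2 := hTprop n _ hx0 hxh
      have h2 : q ≤ Sm ((j : ℝ) / 2) := by
        refine le_trans (hS_le_Sm _) (hSm_anti _ _ ?_)
        linarith
      have h3 : (n : ℝ) * q ≤ (n : ℝ) * Sm ((j : ℝ) / 2) :=
        mul_le_mul_of_nonneg_left h2 (Nat.cast_nonneg n)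
      linarith
    -- termwise bound and binomial theorem
    have hterm : ∀ y ∈ Finset.Icc j n,
        (n.choose y : ℝ) * q ^ y * (1 - q) ^ (n - y)
          ≤ (1/2 : ℝ) ^ j * ((n.choose y : ℝ) * (2 * q) ^ y * (1 - q) ^ (n - y)) := by
      intro y hy
      have hyj : j ≤ y := (Finset.mem_Icc.mp hy).1
      have hA : (0:ℝ) ≤ (n.choose y : ℝ) * (2 * q) ^ y * (1 - q) ^ (n - y) := by
        apply mul_nonneg
        apply mul_nonneg (Nat.cast_nonneg _)
        · exact pow_nonneg (by linarith) _
        · exact pow_nonneg (by linarith) _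
      have h1 : ((1:ℝ)/2) ^ y ≤ (1/2 : ℝ) ^ j :=
        pow_le_pow_of_le_one (by norm_num) (by norm_num) hyj
      have h2y : ((1:ℝ)/2) ^ y * 2 ^ y = 1 := by
        rw [← mul_pow]; norm_num
      have heq : (n.choose y : ℝ) * q ^ y * (1 - q) ^ (n - y)
          = (1/2 : ℝ) ^ y * ((n.choose y : ℝ) * (2 * q) ^ y * (1 - q) ^ (n - y)) := by
        calc (n.choose y : ℝ) * q ^ y * (1 - q) ^ (n - y)
            = ((1/2 : ℝ) ^ y * 2 ^ y) * ((n.choose y : ℝ) * q ^ y * (1 - q) ^ (n - y)) := by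
              rw [h2y]; ring
          _ = (1/2 : ℝ) ^ y * ((n.choose y : ℝ) * (2 * q) ^ y * (1 - q) ^ (n - y)) := by
              rw [mul_pow]; ring
      rw [heq]
      exact mul_le_mul_of_nonneg_right h1 hA
    have hsum1 : p j n ≤ (1/2 : ℝ) ^ j *
        ∑ y ∈ Finset.Icc j n, (n.choose y : ℝ) * (2 * q) ^ y * (1 - q) ^ (n - y) := by
      rw [hp, Finset.mul_sum]
      exact Finset.sum_le_sum hterm
    have hsum2 : ∑ y ∈ Finset.Icc j n, (n.choose y : ℝ) * (2 * q) ^ y * (1 - q) ^ (n - y)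
        ≤ ∑ y ∈ Finset.range (n + 1), (n.choose y : ℝ) * (2 * q) ^ y * (1 - q) ^ (n - y) := by
      apply Finset.sum_le_sum_of_subset_of_nonneg
      · intro y hy
        rw [Finset.mem_range]
        have := (Finset.mem_Icc.mp hy).2
        omega
      · intro y _ _
        apply mul_nonneg
        apply mul_nonneg (Nat.cast_nonneg _)
        · exact pow_nonneg (by linarith) _
        · exact pow_nonneg (by linarith) _
    have hbinom : ∑ y ∈ Finset.range (n + 1), (n.choose y : ℝ) * (2 * q) ^ y * (1 - q) ^ (n - y)
        = (1 + q) ^ n := by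
      have := add_pow (2 * q) (1 - q) n
      have heq : (2 * q + (1 - q)) = 1 + q := by ring
      rw [heq] at this
      rw [this]
      apply Finset.sum_congr rfl
      intro y _
      ring
    have hexp : (1 + q) ^ n ≤ Real.exp (1/2) ^ j := by
      have h1 : (1 + q) ^ n ≤ Real.exp q ^ n := by
        apply pow_le_pow_left₀ (by linarith)
        have := Real.add_one_le_exp q
        linarith
      have h2 : Real.exp q ^ n = Real.exp ((n : ℝ) * q) := (Real.exp_nat_mul q n).symm
      have h3 : Real.exp ((n : ℝ) * q) ≤ Real.exp ((j : ℝ) * (1/2)) := by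
        apply Real.exp_le_exp.mpr
        linarith
      have h4 : Real.exp ((j : ℝ) * (1/2)) = Real.exp (1/2) ^ j := Real.exp_nat_mul _ j
      calc (1 + q) ^ n ≤ Real.exp q ^ n := h1
        _ = Real.exp ((n : ℝ) * q) := h2
        _ ≤ Real.exp ((j : ℝ) * (1/2)) := h3
        _ = Real.exp (1/2) ^ j := h4
    calc p j n ≤ (1/2 : ℝ) ^ j *
          ∑ y ∈ Finset.Icc j n, (n.choose y : ℝ) * (2 * q) ^ y * (1 - q) ^ (n - y) := hsum1
      _ ≤ (1/2 : ℝ) ^ j * (1 + q) ^ n := by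
          rw [← hbinom]
          exact mul_le_mul_of_nonneg_left hsum2 (by positivity)
      _ ≤ (1/2 : ℝ) ^ j * Real.exp (1/2) ^ j :=
          mul_le_mul_of_nonneg_left hexp (by positivity)
      _ = c ^ j := by
          rw [← mul_pow, hc_def]
          congr 1
          ring
  -- constants
  set L : ℝ := Real.log 2 - 1/2 with hL_def
  have hL : 0 < L := by
    have := Real.log_two_gt_d9
    rw [hL_def]
    linarith
  set K : ℝ := 1 + 2 * c / (1 - c) with hK_def
  have hK0 : 0 < K := by
    have : 0 < 2 * c / (1 - c) := by positivity
    rw [hK_def]; linarith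
  refine ⟨K / (1 - c) * (1 / L ^ 2), by positivity, ?_⟩
  intro n hh1
  set j0 : ℕ := ⌊2 * h n⌋₊ with hj0_def
  have hh0 : (0:ℝ) < h n := by linarith
  -- bound each r
  have hrb : ∀ j ∈ Finset.Icc (j0 + 1) n, r j n ≤ K * c ^ j := by
    intro j hj
    obtain ⟨hj1, hj2⟩ := Finset.mem_Icc.mp hj
    rw [hr]
    have h1 : p j n ≤ c ^ j := hpb n hh1 j hj1 hj2
    have h2 : ∑ l ∈ Finset.Icc (j + 1) n, p l n ≤ c ^ (j + 1) / (1 - c) := by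
      calc ∑ l ∈ Finset.Icc (j + 1) n, p l n ≤ ∑ l ∈ Finset.Icc (j + 1) n, c ^ l := by
            apply Finset.sum_le_sum
            intro l hl
            obtain ⟨hl1, hl2⟩ := Finset.mem_Icc.mp hl
            exact hpb n hh1 l (by omega) hl2
        _ ≤ c ^ (j + 1) / (1 - c) := hgeom _ _
    have h3 : (c : ℝ) ^ (j + 1) = c ^ j * c := pow_succ c j
    have h4 : K * c ^ j = c ^ j + 2 * (c ^ j * c / (1 - c)) := by
      rw [hK_def]
      field_simp
    rw [h4]
    rw [h3] at h2
    linarith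
  -- sum the geometric series
  have hsum : ∑ j ∈ Finset.Icc (j0 + 1) n, r j n ≤ K / (1 - c) * c ^ (j0 + 1) := by
    calc ∑ j ∈ Finset.Icc (j0 + 1) n, r j n
        ≤ ∑ j ∈ Finset.Icc (j0 + 1) n, K * c ^ j := Finset.sum_le_sum hrb
      _ = K * ∑ j ∈ Finset.Icc (j0 + 1) n, c ^ j := by rw [Finset.mul_sum]
      _ ≤ K * (c ^ (j0 + 1) / (1 - c)) :=
          mul_le_mul_of_nonneg_left (hgeom _ _) hK0.le
      _ = K / (1 - c) * c ^ (j0 + 1) := by ring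
  -- c^(j0+1) ≤ exp(-(2 L h)) ≤ 1/(L² h²)
  have hcpow : c ^ (j0 + 1) ≤ 1 / (L ^ 2 * h n ^ 2) := by
    have h2h : 2 * h n ≤ ((j0 + 1 : ℕ) : ℝ) := by
      have := Nat.lt_floor_add_one (2 * h n)
      push_cast
      push_cast at this
      linarith
    have e1 : c ^ (j0 + 1) = c ^ (((j0 + 1 : ℕ) : ℝ)) := (Real.rpow_natCast c (j0 + 1)).symm
    have e2 : c ^ (((j0 + 1 : ℕ) : ℝ)) ≤ c ^ (2 * h n) :=
      Real.rpow_le_rpow_of_exponent_ge hc0 hc1.le h2h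
    have e3 : c ^ (2 * h n) = Real.exp (2 * h n * Real.log c) := by
      rw [Real.rpow_def_of_pos hc0]
      ring_nf
    have hlogc : Real.log c = -L := by
      rw [hc_def, Real.log_div (Real.exp_ne_zero _) two_ne_zero, Real.log_exp, hL_def]
      ring
    have e4 : 2 * h n * Real.log c = -(2 * L * h n) := by rw [hlogc]; ring
    set t : ℝ := 2 * L * h n with ht_def
    have ht0 : 0 < t := by positivity
    have hexpt : (t / 2) ^ 2 ≤ Real.exp t := by
      have e5 : t / 2 + 1 ≤ Real.exp (t / 2) := Real.add_one_le_exp _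
      have e6 : Real.exp t = Real.exp (t / 2) * Real.exp (t / 2) := by
        rw [← Real.exp_add]
        ring_nf
      nlinarith [Real.exp_pos (t / 2)]
    have ht2 : (0:ℝ) < (t / 2) ^ 2 := by positivity
    have e7 : Real.exp (-(t)) ≤ 1 / (t / 2) ^ 2 := by
      rw [Real.exp_neg]
      rw [one_div]
      exact inv_anti₀ ht2 hexpt
    have e8 : (t / 2) ^ 2 = L ^ 2 * h n ^ 2 := by
      rw [ht_def]
      ring
    calc c ^ (j0 + 1) = c ^ (((j0 + 1 : ℕ) : ℝ)) := e1
      _ ≤ c ^ (2 * h n) := e2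
      _ = Real.exp (2 * h n * Real.log c) := e3
      _ = Real.exp (-t) := by rw [e4]
      _ ≤ 1 / (t / 2) ^ 2 := e7
      _ = 1 / (L ^ 2 * h n ^ 2) := by rw [e8]
  -- conclude
  have hfinal : K / (1 - c) * c ^ (j0 + 1) ≤ K / (1 - c) * (1 / L ^ 2) / h n ^ ((3:ℝ)/2) := by
    have h32 : h n ^ ((3:ℝ)/2) ≤ h n ^ (2:ℝ) :=
      Real.rpow_le_rpow_of_exponent_le hh1 (by norm_num)
    have h32' : h n ^ (2:ℝ) = h n ^ (2:ℕ) := by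
      rw [← Real.rpow_natCast (h n) 2]
      norm_num
    have hpow32 : (0:ℝ) < h n ^ ((3:ℝ)/2) := Real.rpow_pos_of_pos hh0 _
    have step1 : K / (1 - c) * c ^ (j0 + 1) ≤ K / (1 - c) * (1 / (L ^ 2 * h n ^ 2)) :=
      mul_le_mul_of_nonneg_left hcpow (by positivity)
    have step2 : K / (1 - c) * (1 / (L ^ 2 * h n ^ 2))
        = K / (1 - c) * (1 / L ^ 2) / h n ^ (2:ℕ) := by
      rw [mul_one_div, mul_one_div, div_div, div_div, div_div]
    have step3 : K / (1 - c) * (1 / L ^ 2) / h n ^ (2:ℕ)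
        ≤ K / (1 - c) * (1 / L ^ 2) / h n ^ ((3:ℝ)/2) := by
      apply div_le_div_of_nonneg_left (by positivity) hpow32
      rw [← h32']
      exact h32
    calc K / (1 - c) * c ^ (j0 + 1) ≤ K / (1 - c) * (1 / (L ^ 2 * h n ^ 2)) := step1
      _ = K / (1 - c) * (1 / L ^ 2) / h n ^ (2:ℕ) := step2
      _ ≤ K / (1 - c) * (1 / L ^ 2) / h n ^ ((3:ℝ)/2) := step3
  exact le_trans hsum hfinal
end

section
/- Suppose the survival function S satisfies lim_n √n·ψ(n)/S(n) = 0, where ψ(n) = S(n−1) − S(n). Then for each M > 0, lim_n S(n − M√n)/S(n + M√n) = 1. -/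
/-!
With `L = log ∘ S`, which is antitone, the hypothesis makes the unit-step drops
`L (k - 1) - L k ≤ ψ k / S k` of size `o(1 / √k)`. The window `[n - M√n, n + M√n]` lies above `n / 2`
and is covered by `O(√n)` unit steps, so `L` drops by `o(1)` across it, and the ratio of survival
probabilities is the exponential of that drop.
-/

open MeasureTheory ProbabilityTheory Filter Topology

lemma antitone_toReal_measure_setOf_lt {Ω α : Type*} [MeasurableSpace Ω] [Preorder α]
    (μ : Measure Ω) [IsFiniteMeasure μ] (X : Ω → α) :
    Antitone fun x => (μ {ω | x < X ω}).toReal :=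
  fun _ _ hxy => ENNReal.toReal_mono (measure_ne_top _ _)
    (measure_mono fun _ hω => hxy.trans_lt hω)

lemma eventually_mul_sqrt_le_half (M : ℝ) : ∀ᶠ n : ℕ in atTop, M * √n ≤ n / 2 := by
  filter_upwards [(tendsto_natCast_atTop_atTop (R := ℝ)).eventually_ge_atTop (4 * M ^ 2)]
    with n hn
  have hsq := Real.sq_sqrt (Nat.cast_nonneg (α := ℝ) n)
  nlinarith [Real.sqrt_nonneg (n : ℝ)]

lemma tendsto_sqrt_mul_log_sub_log {f : ℝ → ℝ} (hf : Antitone f) (hpos : ∀ x, 0 < f x)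
    (h : Tendsto (fun k : ℕ => √k * (f (k - 1) - f k) / f k) atTop (𝓝 0)) :
    Tendsto (fun k : ℕ => √k * (Real.log (f (k - 1)) - Real.log (f k))) atTop (𝓝 0) := by
  refine squeeze_zero (fun k => mul_nonneg (Real.sqrt_nonneg _) ?_) (fun k => ?_) h
  · exact sub_nonneg.2 (Real.log_le_log (hpos _) (hf (by linarith)))
  · rw [mul_div_assoc, ← Real.log_div (hpos _).ne' (hpos _).ne', sub_div, div_self (hpos _).ne']
    exact mul_le_mul_of_nonneg_left (Real.log_le_sub_one_of_pos (div_pos (hpos _) (hpos _)))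
      (Real.sqrt_nonneg _)

section Window

variable {g : ℝ → ℝ}

/-- `y - x + 2` bounds the number of unit steps from `⌊x⌋₊` to `⌈y⌉₊`. -/
lemma sub_le_of_sqrt_mul_sub_le (hg : Antitone g) {K : ℕ} {ε : ℝ} (hε : 0 ≤ ε)
    (hK : ∀ k : ℕ, K ≤ k → √k * (g (k - 1) - g k) ≤ ε) {x y : ℝ} (hKx : K ≤ x) (hx : 0 < x)
    (hxy : x ≤ y) : g x - g y ≤ (y - x + 2) * ε / √x := by
  set a := ⌊x⌋₊
  set b := ⌈y⌉₊
  have hab : a ≤ b := Nat.cast_le.1 ((Nat.floor_le hx.le).trans (hxy.trans (Nat.le_ceil y)))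
  have hsqrt : 0 < √x := Real.sqrt_pos.2 hx
  have hstep : ∀ i ∈ Finset.Ico a b, g i - g (i + 1 : ℕ) ≤ ε / √x := by
    intro i hi
    have hxi : x ≤ (i + 1 : ℕ) := (Nat.lt_floor_add_one x).le.trans
      (by exact_mod_cast Nat.succ_le_succ (Finset.mem_Ico.1 hi).1)
    have hsqrt_le := Real.sqrt_le_sqrt hxi
    have hle := hK (i + 1) (by exact_mod_cast hKx.trans hxi)
    rw [Nat.cast_add_one, add_sub_cancel_right, ← Nat.cast_add_one] at hle
    calc g i - g (i + 1 : ℕ) ≤ ε / √(i + 1 : ℕ) := (le_div_iff₀' (hsqrt.trans_le hsqrt_le)).2 hle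
      _ ≤ ε / √x := div_le_div_of_nonneg_left hε hsqrt hsqrt_le
  have hcard : ((b - a : ℕ) : ℝ) ≤ y - x + 2 := by
    rw [Nat.cast_sub hab]
    linarith [Nat.ceil_lt_add_one (hx.le.trans hxy), Nat.lt_floor_add_one x]
  calc g x - g y ≤ g a - g b := sub_le_sub (hg (Nat.floor_le hx.le)) (hg (Nat.le_ceil y))
    _ = ∑ i ∈ Finset.Ico a b, (g i - g (i + 1 : ℕ)) := by
      rw [← neg_sub, ← Finset.sum_Ico_sub (fun i : ℕ => g i) hab, ← Finset.sum_neg_distrib]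
      simp only [neg_sub]
    _ ≤ (b - a : ℕ) * (ε / √x) := by
      simpa [nsmul_eq_mul] using Finset.sum_le_card_nsmul _ _ _ hstep
    _ ≤ (y - x + 2) * ε / √x := by
      rw [mul_div_assoc]
      exact mul_le_mul_of_nonneg_right hcard (by positivity)

theorem tendsto_sub_of_tendsto_sqrt_mul_sub (hg : Antitone g)
    (h : Tendsto (fun k : ℕ => √k * (g (k - 1) - g k)) atTop (𝓝 0)) {M : ℝ} (hM : 0 ≤ M) :
    Tendsto (fun n : ℕ => g (n - M * √n) - g (n + M * √n)) atTop (𝓝 0) := by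
  refine tendsto_order.2 ⟨fun c hc => Eventually.of_forall fun n => ?_, fun c hc => ?_⟩
  · have : 0 ≤ M * √n := mul_nonneg hM (Real.sqrt_nonneg _)
    linarith [hg (by linarith : (n : ℝ) - M * √n ≤ n + M * √n)]
  set ε := c / (8 * (M + 1))
  have hε : 0 < ε := by positivity
  obtain ⟨K, hK⟩ := eventually_atTop.1 ((tendsto_order.1 h).2 ε hε)
  filter_upwards [eventually_mul_sqrt_le_half M, eventually_ge_atTop (2 * K + 1)]
    with n hhalf hn
  have hn : (2 * K + 1 : ℝ) ≤ n := by exact_mod_cast hn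
  have hsqrt_n : 1 ≤ √n := Real.one_le_sqrt.2 (by linarith)
  have hsqrt_x : √n / 2 ≤ √(n - M * √n) := by
    rw [Real.le_sqrt (by positivity) (by linarith), div_pow, Real.sq_sqrt (by linarith)]
    linarith
  have hMs : 0 ≤ M * √n := mul_nonneg hM (Real.sqrt_nonneg _)
  calc g (n - M * √n) - g (n + M * √n)
      ≤ (n + M * √n - (n - M * √n) + 2) * ε / √(n - M * √n) :=
        sub_le_of_sqrt_mul_sub_le hg hε.le (fun k hk => (hK k hk).le) (by linarith)
          (by linarith) (by linarith)
    _ ≤ (2 * M * √n + 2) * ε / (√n / 2) := by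
        rw [show n + M * √n - (n - M * √n) + 2 = 2 * M * √n + 2 by ring]
        gcongr
    _ ≤ 4 * (M + 1) * ε := by
        rw [div_le_iff₀ (by positivity)]
        nlinarith [mul_nonneg hM hε.le]
    _ = c / 2 := by simp only [ε]; field_simp; ring
    _ < c := half_lt_self hc

end Window

theorem survival_window_ratio_tendsto_one_general
    {Ω : Type*} [MeasureSpace Ω] [IsProbabilityMeasure (ℙ : Measure Ω)]
    (X : Ω → ℝ)
    (S : ℝ → ℝ) (hS : ∀ x, S x = (ℙ {ω | x < X ω}).toReal) (hSpos : ∀ x, 0 < S x)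
    (ψ : ℕ → ℝ) (hψ : ∀ n : ℕ, ψ n = S ((n : ℝ) - 1) - S n)
    (hcond : Tendsto (fun n : ℕ => Real.sqrt n * ψ n / S n) atTop (nhds 0)) :
    ∀ M : ℝ, 0 < M →
      Tendsto (fun n : ℕ => S ((n : ℝ) - M * Real.sqrt n) / S ((n : ℝ) + M * Real.sqrt n))
        atTop (nhds 1) := by
  intro M hM
  have hS_anti : Antitone S := funext hS ▸ antitone_toReal_measure_setOf_lt ℙ X
  have hlogS_anti : Antitone fun x => Real.log (S x) :=
    fun x y hxy => Real.log_le_log (hSpos y) (hS_anti hxy)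
  simp only [hψ] at hcond
  have hlog_window := tendsto_sub_of_tendsto_sqrt_mul_sub hlogS_anti
    (tendsto_sqrt_mul_log_sub_log hS_anti hSpos hcond) hM.le
  simpa only [Function.comp_def, Real.exp_sub, Real.exp_log (hSpos _)] using
    Real.tendsto_exp_nhds_zero_nhds_one.comp hlog_window

/-- if `√n·ψ(n)/S(n) → 0` with `ψ(n) = S(n−1) − S(n)`, then for each
`M > 0`, `S(n − M√n)/S(n + M√n) → 1`. -/
theorem survival_window_ratio_tendsto_one
    {Ω : Type*} [MeasureSpace Ω] [IsProbabilityMeasure (ℙ : Measure Ω)]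
    (X : Ω → ℝ) (hX : Measurable X) (hXpos : ∀ ω, 0 < X ω)
    (S : ℝ → ℝ) (hS : ∀ x, S x = (ℙ {ω | x < X ω}).toReal) (hSpos : ∀ x, 0 < S x)
    (ψ : ℕ → ℝ) (hψ : ∀ n : ℕ, ψ n = S ((n : ℝ) - 1) - S n)
    (hcond : Tendsto (fun n : ℕ => Real.sqrt n * ψ n / S n) atTop (nhds 0)) :
    ∀ M : ℝ, 0 < M →
      Tendsto (fun n : ℕ => S ((n : ℝ) - M * Real.sqrt n) / S ((n : ℝ) + M * Real.sqrt n))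
        atTop (nhds 1) :=
  survival_window_ratio_tendsto_one_general X S hS hSpos ψ hψ hcond
end

section
/- Suppose the survival function S satisfies: for every M ≥ 0, sup_{j ∈ [n−M√n, n+M√n] ∩ ℕ} |ψ(j)/ψ(n) − 1| → 0 as n → ∞, where ψ(j)=S(j−1)−S(j). Then this condition implies lim_n √n·ψ(n)/S(n) = 0. -/
open MeasureTheory ProbabilityTheory Filter

/-- condition (4.6) — uniform ratio stability of `ψ` over windows
`[n − M√n, n + M√n] ∩ ℕ` for every `M ≥ 0` — implies condition (4.4):
`√n·ψ(n)/S(n) → 0`. -/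
theorem window_stability_implies_hazard_condition
    {Ω : Type*} [MeasureSpace Ω] [IsProbabilityMeasure (ℙ : Measure Ω)]
    (X : Ω → ℝ) (hX : Measurable X) (hXpos : ∀ ω, 0 < X ω)
    (S : ℝ → ℝ) (hS : ∀ x, S x = (ℙ {ω | x < X ω}).toReal) (hSpos : ∀ x, 0 < S x)
    (ψ : ℕ → ℝ) (hψ : ∀ n : ℕ, ψ n = S ((n : ℝ) - 1) - S n)
    (hcond : ∀ M : ℝ, 0 ≤ M →
      Tendsto (fun n : ℕ =>
          sSup {t : ℝ | ∃ j : ℕ, (n : ℝ) - M * Real.sqrt n ≤ j ∧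
            (j : ℝ) ≤ (n : ℝ) + M * Real.sqrt n ∧ t = |ψ j / ψ n - 1|})
        atTop (nhds 0)) :
    Tendsto (fun n : ℕ => Real.sqrt n * ψ n / S n) atTop (nhds 0) := by
  -- S is nonincreasing
  have hSmono : ∀ x y : ℝ, x ≤ y → S y ≤ S x := by
    intro x y hxy
    rw [hS, hS]
    exact ENNReal.toReal_mono (measure_ne_top _ _)
      (measure_mono (fun ω hω => lt_of_le_of_lt hxy hω))
  have hψnn : ∀ n : ℕ, 0 ≤ ψ n := by
    intro n
    rw [hψ]
    have := hSmono ((n : ℝ) - 1) n (by linarith)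
    linarith
  -- telescoping
  have htel : ∀ n k : ℕ, ∑ i ∈ Finset.range k, ψ (n + 1 + i)
      = S ((n : ℝ)) - S (((n + k : ℕ) : ℝ)) := by
    intro n k
    induction k with
    | zero => simp
    | succ k ih =>
      rw [Finset.sum_range_succ, ih, hψ]
      have h1 : ((n + 1 + k : ℕ) : ℝ) - 1 = ((n + k : ℕ) : ℝ) := by push_cast; ring
      have h2 : ((n + 1 + k : ℕ) : ℝ) = ((n + (k + 1) : ℕ) : ℝ) := by push_cast; ring
      rw [h1, h2]
      ring
  rw [Metric.tendsto_atTop]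
  intro ε hε
  set M : ℝ := 1 + 3 / ε with hMdef
  have hM : 0 ≤ M := by positivity
  obtain ⟨N1, hN1⟩ := (Metric.tendsto_atTop.mp (hcond M hM)) (1 / 2) (by norm_num)
  refine ⟨max N1 1, fun n hn => ?_⟩
  have hnN1 : n ≥ N1 := le_trans (le_max_left _ _) hn
  have hn1 : (1 : ℕ) ≤ n := le_trans (le_max_right _ _) hn
  have hsqrt1 : (1 : ℝ) ≤ Real.sqrt n := by
    rw [show (1 : ℝ) = Real.sqrt 1 by simp]
    exact Real.sqrt_le_sqrt (by exact_mod_cast hn1)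
  have hsqrt0 : (0 : ℝ) < Real.sqrt n := by linarith
  set T : Set ℝ := {t : ℝ | ∃ j : ℕ, (n : ℝ) - M * Real.sqrt n ≤ j ∧
      (j : ℝ) ≤ (n : ℝ) + M * Real.sqrt n ∧ t = |ψ j / ψ n - 1|} with hTdef
  have hTfin : T.Finite := by
    apply Set.Finite.subset
      (Set.Finite.image (fun j : ℕ => |ψ j / ψ n - 1|)
        (Set.finite_Iic (Nat.floor ((n : ℝ) + M * Real.sqrt n))))
    rintro t ⟨j, _, h2, rfl⟩
    exact ⟨j, Nat.le_floor h2, rfl⟩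
  have hTbdd : BddAbove T := hTfin.bddAbove
  have hsup : sSup T < 1 / 2 := by
    have := hN1 n hnN1
    rw [Real.dist_eq, sub_zero] at this
    calc sSup T ≤ |sSup T| := le_abs_self _
    _ < 1 / 2 := this
  have hle : ∀ j : ℕ, (n : ℝ) - M * Real.sqrt n ≤ j → (j : ℝ) ≤ (n : ℝ) + M * Real.sqrt n →
      |ψ j / ψ n - 1| < 1 / 2 := by
    intro j h1 h2
    exact lt_of_le_of_lt (le_csSup hTbdd ⟨j, h1, h2, rfl⟩) hsup
  have hMn : 0 ≤ M * Real.sqrt n := by positivity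
  have hψn_pos : 0 < ψ n := by
    rcases (hψnn n).lt_or_eq with h | h
    · exact h
    · exfalso
      have := hle n (by linarith) (by linarith)
      rw [← h] at this
      simp at this
      linarith
  have hhalf : ∀ j : ℕ, (n : ℝ) ≤ j → (j : ℝ) ≤ (n : ℝ) + M * Real.sqrt n →
      ψ n / 2 ≤ ψ j := by
    intro j h1 h2
    have h3 := hle j (by linarith) h2
    rw [abs_lt] at h3
    have h4 : 1 / 2 < ψ j / ψ n := by linarith [h3.1]
    rw [lt_div_iff₀ hψn_pos] at h4
    linarith
  set k : ℕ := Nat.floor (M * Real.sqrt n) with hkdef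
  have hk_le : (k : ℝ) ≤ M * Real.sqrt n := Nat.floor_le hMn
  have hk_gt : M * Real.sqrt n - 1 < k := by
    have := Nat.lt_floor_add_one (M * Real.sqrt n)
    linarith
  have hsum : ∀ i ∈ Finset.range k, ψ n / 2 ≤ ψ (n + 1 + i) := by
    intro i hi
    rw [Finset.mem_range] at hi
    apply hhalf
    · push_cast; linarith
    · have hik : (i : ℝ) + 1 ≤ k := by exact_mod_cast Nat.succ_le_of_lt hi
      push_cast
      linarith
  have hSn : (k : ℝ) * (ψ n / 2) ≤ S n := by
    have h1 : (Finset.range k).card • (ψ n / 2) ≤ ∑ i ∈ Finset.range k, ψ (n + 1 + i) :=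
      Finset.card_nsmul_le_sum _ _ _ hsum
    rw [Finset.card_range, nsmul_eq_mul] at h1
    have h2 := htel n k
    have h3 := hSpos (((n + k : ℕ) : ℝ))
    linarith
  have hkey : (3 / ε) * Real.sqrt n ≤ (k : ℝ) := by
    have h5 : Real.sqrt n + (3 / ε) * Real.sqrt n - 1 < (k : ℝ) := by
      have h6 : M * Real.sqrt n = Real.sqrt n + (3 / ε) * Real.sqrt n := by
        rw [hMdef]; ring
      rw [← h6]; exact hk_gt
    linarith [h5, hsqrt1]
  have hD : (0 : ℝ) < (3 / ε) * Real.sqrt n * (ψ n / 2) := by positivity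
  have hSn' : (3 / ε) * Real.sqrt n * (ψ n / 2) ≤ S n := by
    calc (3 / ε) * Real.sqrt n * (ψ n / 2) ≤ (k : ℝ) * (ψ n / 2) := by
          apply mul_le_mul_of_nonneg_right hkey
          linarith
      _ ≤ S n := hSn
  have hbound : Real.sqrt n * ψ n / S n ≤ 2 * ε / 3 := by
    have h1 : Real.sqrt n * ψ n / S n ≤
        Real.sqrt n * ψ n / ((3 / ε) * Real.sqrt n * (ψ n / 2)) := by
      apply div_le_div_of_nonneg_left (by positivity) hD hSn'
    have h2 : Real.sqrt n * ψ n / ((3 / ε) * Real.sqrt n * (ψ n / 2)) = 2 * ε / 3 := by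
      field_simp
    linarith
  have hnn : 0 ≤ Real.sqrt n * ψ n / S n := by
    have := hSpos ((n : ℝ))
    positivity
  rw [Real.dist_eq, sub_zero, abs_of_nonneg hnn]
  linarith
end
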